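/- For D = {α+β, 3α+β} and any map ξ:D→ℂ∖{0}, the coadjoint orbit Ω_{D,ξ} is a proper subset of the basic subvariety 𝒪_{D,ξ}. -/

import Mathlib

open scoped RealInnerProductSpace

/-- The exponential of a (nilpotent) endomorphism, as a finite sum. -/
noncomputable def expNil {M : Type*} [AddCommGroup M] [Module ℂ M] (A : Module.End ℂ M) :
    Module.End ℂ M :=
  ∑ k ∈ Finset.range (nilpotencyClass A), (k.factorial : ℂ)⁻¹ • A ^ k

/-- The coadjoint orbit `Ω_{D,ξ}` of the linear form `f_{D,ξ} = ∑_{γ∈D} ξ(γ) e_γ*`,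
consisting of all `f_{D,ξ} ∘ exp(−ad x)`, `x ∈ 𝔫`.  Roots are encoded by indices. -/
noncomputable def coadjointOrbit {ι : Type*} {n : Type*} [LieRing n] [LieAlgebra ℂ n]
    (e : Module.Basis ι ℂ n) (D : Finset ι) (ξ : ι → ℂ) :
    Set (Module.Dual ℂ n) :=
  {lam | ∃ x : n, lam = (∑ i ∈ D, ξ i • e.coord i).comp (expNil (-(LieAlgebra.ad ℂ n x)))}

/-- The basic subvariety `𝒪_{D,ξ} = Σ_{γ∈D} Ω_{{γ},ξ|{γ}}`. -/
noncomputable def basicSubvariety {ι : Type*} [DecidableEq ι] {n : Type*} [LieRing n] [LieAlgebra ℂ n]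
    (e : Module.Basis ι ℂ n) (D : Finset ι) (ξ : ι → ℂ) :
    Set (Module.Dual ℂ n) :=
  {lam | ∃ μ : ι → Module.Dual ℂ n,
    (∀ i ∈ D, μ i ∈ coadjointOrbit e {i} ξ) ∧ lam = ∑ i ∈ D, μ i}

/-! The inclusion holds because `(∑_γ ξ_γ e_γ*) ∘ exp(−ad x) = ∑_γ (ξ_γ e_γ*) ∘ exp(−ad x)`.
For strictness, index the roots `α, β, α+β, 2α+β, 3α+β, 3α+2β` by `0, …, 5` and take
`λ = (ξ₂ e₂*) ∘ exp(−ad e₀) + ξ₄ e₄*`, which lies in `𝒪`. On the orbit, the value at `e₃` is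
`−ξ₄ c₃ x₀`, where `x₀` is the `e₀`-coordinate of `x`, and the value at `e₁` is
`−ξ₂ c₁ x₀ − ξ₄ c₁ c₂ c₃ x₀³ / 6`. Since `λ(e₃) = 0`, a representation `λ = f ∘ exp(−ad x)` forces
`x₀ = 0`, and then `λ(e₁) = −ξ₂ c₁` would have to vanish. -/

theorem expNil_apply_eq_sum_range {M : Type*} [AddCommGroup M] [Module ℂ M] {A : Module.End ℂ M}
    (hA : IsNilpotent A) {v : M} {m : ℕ} (hv : (A ^ m) v = 0) :
    expNil A v = ∑ k ∈ Finset.range m, (k.factorial : ℂ)⁻¹ • (A ^ k) v := by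
  have hstable : ∀ p, (∀ k ≥ p, (A ^ k) v = 0) → ∀ N ≥ p,
      ∑ k ∈ Finset.range N, (k.factorial : ℂ)⁻¹ • (A ^ k) v
        = ∑ k ∈ Finset.range p, (k.factorial : ℂ)⁻¹ • (A ^ k) v := by
    intro p hp N hN
    refine (Finset.sum_subset (Finset.range_subset_range.2 hN) fun k _ hk => ?_).symm
    rw [hp k (by simpa using hk), smul_zero]
  have hv' : ∀ k ≥ m, (A ^ k) v = 0 := fun k hk => by
    rw [← Nat.sub_add_cancel hk, pow_add, Module.End.mul_apply, hv, map_zero]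
  have hA' : ∀ k ≥ nilpotencyClass A, (A ^ k) v = 0 := fun k hk => by
    rw [pow_eq_zero_of_le hk (pow_nilpotencyClass hA), LinearMap.zero_apply]
  rw [expNil, LinearMap.sum_apply]
  simp only [LinearMap.smul_apply]
  rw [← hstable _ hA' (max m (nilpotencyClass A)) (le_max_right _ _),
    hstable _ hv' _ (le_max_left _ _)]

theorem linearIndependent_pair_of_gram_ne_zero {E : Type*} [NormedAddCommGroup E] [InnerProductSpace ℝ E]
    {x y : E} (h : ⟪x, x⟫ * ⟪y, y⟫ - ⟪x, y⟫ ^ 2 ≠ 0) : LinearIndependent ℝ ![x, y] := by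
  refine LinearIndependent.pair_iff.2 fun s t hst => ?_
  have hx : s * ⟪x, x⟫ + t * ⟪x, y⟫ = 0 := by
    simpa [inner_add_right, real_inner_smul_right, real_inner_comm x y] using congrArg (⟪x, ·⟫) hst
  have hy : s * ⟪x, y⟫ + t * ⟪y, y⟫ = 0 := by
    simpa [inner_add_right, real_inner_smul_right, real_inner_comm x y] using congrArg (⟪y, ·⟫) hst
  constructor
  · exact (mul_eq_zero.1 (by linear_combination ⟪y, y⟫ * hx - ⟪x, y⟫ * hy)).resolve_right h
  · exact (mul_eq_zero.1 (by linear_combination ⟪x, x⟫ * hy - ⟪x, y⟫ * hx)).resolve_right h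

def g2PosRootCoeff : Fin 6 → ℕ × ℕ := ![(1, 0), (0, 1), (1, 1), (2, 1), (3, 1), (3, 2)]

section G2Roots

variable {E : Type*} [AddCommGroup E] [Module ℝ E]

def g2PosRoot (α β : E) (k : Fin 6) : E :=
  ((g2PosRootCoeff k).1 : ℝ) • α + ((g2PosRootCoeff k).2 : ℝ) • β

theorem g2PosRoot_eq_vec (α β : E) :
    g2PosRoot α β = ![α, β, α + β, (2:ℝ) • α + β, (3:ℝ) • α + β, (3:ℝ) • α + (2:ℝ) • β] := by
  funext k
  fin_cases k <;> simp [g2PosRoot, g2PosRootCoeff]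

theorem exists_g2PosRootCoeff_eq_add {α β : E} (hαβ : LinearIndependent ℝ ![α, β]) {i j : Fin 6}
    (h : g2PosRoot α β i + g2PosRoot α β j ∈ Set.range (g2PosRoot α β)) :
    ∃ k, g2PosRootCoeff i + g2PosRootCoeff j = g2PosRootCoeff k := by
  obtain ⟨k, hk⟩ := h
  obtain ⟨ha, hb⟩ := LinearIndependent.pair_iff.1 hαβ
    ((g2PosRootCoeff i).1 + (g2PosRootCoeff j).1 - (g2PosRootCoeff k).1)
    ((g2PosRootCoeff i).2 + (g2PosRootCoeff j).2 - (g2PosRootCoeff k).2)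
    (by simp only [g2PosRoot] at hk; linear_combination (norm := module) -hk)
  refine ⟨k, Prod.ext ?_ ?_⟩
  · exact_mod_cast sub_eq_zero.1 ha
  · exact_mod_cast sub_eq_zero.1 hb

end G2Roots

theorem expNil_zero {M : Type*} [AddCommGroup M] [Module ℂ M] :
    expNil (0 : Module.End ℂ M) = 1 :=
  LinearMap.ext fun v => by
    rw [expNil_apply_eq_sum_range IsNilpotent.zero (m := 1) (by simp)]
    simp

theorem Module.Basis.lie_eq_sum_repr_smul_lie {R L ι : Type*} [CommRing R] [LieRing L]
    [LieAlgebra R L] [Fintype ι] (e : Module.Basis ι R L) (x y : L) :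
    ⁅x, y⁆ = ∑ j, e.repr x j • ⁅e j, y⁆ := by
  conv_lhs => rw [← e.sum_repr x]
  simp only [sum_lie, smul_lie]

structure IsG2NilradicalBasis {n : Type*} [LieRing n] [LieAlgebra ℂ n]
    (e : Module.Basis (Fin 6) ℂ n) (c₁ c₂ c₃ c₄ c₅ : ℂ) : Prop where
  lie_zero_one : ⁅e 0, e 1⁆ = c₁ • e 2
  lie_zero_two : ⁅e 0, e 2⁆ = c₂ • e 3
  lie_zero_three : ⁅e 0, e 3⁆ = c₃ • e 4
  lie_four_one : ⁅e 4, e 1⁆ = c₄ • e 5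
  lie_two_three : ⁅e 2, e 3⁆ = c₅ • e 5
  lie_eq_zero :
    ∀ i j, (∀ k, g2PosRootCoeff i + g2PosRootCoeff j ≠ g2PosRootCoeff k) → ⁅e i, e j⁆ = 0

namespace IsG2NilradicalBasis

open LieAlgebra

variable {n : Type*} [LieRing n] [LieAlgebra ℂ n] {e : Module.Basis (Fin 6) ℂ n}
  {c₁ c₂ c₃ c₄ c₅ : ℂ} (h : IsG2NilradicalBasis e c₁ c₂ c₃ c₄ c₅) (x : n)
include h

theorem lie_one : ⁅x, e 1⁆ = (e.repr x 0 * c₁) • e 2 + (e.repr x 4 * c₄) • e 5 := by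
  rw [e.lie_eq_sum_repr_smul_lie, Fin.sum_univ_six]
  simp (disch := decide) only [h.lie_eq_zero, h.lie_zero_one, h.lie_four_one]
  module

theorem lie_two : ⁅x, e 2⁆ = (e.repr x 0 * c₂) • e 3 - (e.repr x 3 * c₅) • e 5 := by
  rw [e.lie_eq_sum_repr_smul_lie, Fin.sum_univ_six, ← lie_skew (e 3), h.lie_two_three]
  simp (disch := decide) only [h.lie_eq_zero, h.lie_zero_two]
  module

theorem lie_three : ⁅x, e 3⁆ = (e.repr x 0 * c₃) • e 4 + (e.repr x 2 * c₅) • e 5 := by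
  rw [e.lie_eq_sum_repr_smul_lie, Fin.sum_univ_six]
  simp (disch := decide) only [h.lie_eq_zero, h.lie_zero_three, h.lie_two_three]
  module

theorem lie_four : ⁅x, e 4⁆ = -(e.repr x 1 * c₄) • e 5 := by
  rw [e.lie_eq_sum_repr_smul_lie, Fin.sum_univ_six, ← lie_skew (e 1), h.lie_four_one]
  simp (disch := decide) only [h.lie_eq_zero]
  module

theorem lie_five : ⁅x, e 5⁆ = 0 := by
  rw [e.lie_eq_sum_repr_smul_lie, Fin.sum_univ_six]
  simp (disch := decide) [h.lie_eq_zero]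

theorem expNil_neg_ad_apply_three (hx : IsNilpotent (ad ℂ n x)) :
    expNil (-ad ℂ n x) (e 3) = e 3 - (e.repr x 0 * c₃) • e 4
      - (e.repr x 2 * c₅ + e.repr x 0 * c₃ * (e.repr x 1 * c₄) / 2) • e 5 := by
  rw [expNil_apply_eq_sum_range hx.neg (m := 3)]
  · simp only [Finset.sum_range_succ, Finset.range_one, Finset.sum_singleton, Nat.factorial,
      Nat.cast_one, inv_one, pow_zero, Module.End.one_apply, one_smul, pow_succ, mul_neg, one_mul,
      LinearMap.neg_apply, ad_apply, h.lie_three, neg_add_rev, smul_add, smul_neg,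
      neg_mul, neg_neg, Module.End.mul_apply, lie_add, lie_smul, h.lie_four, neg_smul, h.lie_five,
      smul_zero, add_zero]
    module
  · simp [pow_succ, h.lie_three, h.lie_four, h.lie_five]

theorem expNil_neg_ad_apply_one (hx : IsNilpotent (ad ℂ n x)) :
    expNil (-ad ℂ n x) (e 1) = e 1 - (e.repr x 0 * c₁) • e 2
      + (e.repr x 0 ^ 2 * c₁ * c₂ / 2) • e 3 - (e.repr x 0 ^ 3 * c₁ * c₂ * c₃ / 6) • e 4
      - (e.repr x 4 * c₄ + e.repr x 0 * c₁ * (e.repr x 3 * c₅) / 2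
        + e.repr x 0 ^ 2 * c₁ * c₂ * (e.repr x 2 * c₅) / 6
        + e.repr x 0 ^ 3 * c₁ * c₂ * c₃ * (e.repr x 1 * c₄) / 24) • e 5 := by
  rw [expNil_apply_eq_sum_range hx.neg (m := 5)]
  · simp only [Finset.sum_range_succ, Finset.range_one, Finset.sum_singleton, Nat.factorial,
      Nat.cast_one, inv_one, pow_zero, Module.End.one_apply, one_smul, Nat.succ_eq_add_one,
      zero_add, mul_one, pow_succ, mul_neg, one_mul, LinearMap.neg_apply, ad_apply, h.lie_one,
      neg_add_rev, smul_add, smul_neg, Nat.reduceAdd, Nat.cast_ofNat, neg_mul, neg_neg,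
      Module.End.mul_apply, lie_add, lie_smul, h.lie_two, h.lie_five, smul_zero, add_zero,
      Nat.reduceMul, map_smul, lie_sub, h.lie_three, sub_zero, h.lie_four, neg_smul]
    module
  · simp [pow_succ, h.lie_one, h.lie_two, h.lie_three, h.lie_four, h.lie_five]

end IsG2NilradicalBasis

section BasicSubvariety

variable {ι n : Type*} [DecidableEq ι] [LieRing n] [LieAlgebra ℂ n] (e : Module.Basis ι ℂ n)
  (D : Finset ι) (ξ : ι → ℂ)

theorem sum_comp_expNil_mem_basicSubvariety (y : ι → n) :
    ∑ i ∈ D, (ξ i • e.coord i).comp (expNil (-LieAlgebra.ad ℂ n (y i)))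
      ∈ basicSubvariety e D ξ :=
  ⟨fun i => (ξ i • e.coord i).comp (expNil (-LieAlgebra.ad ℂ n (y i))),
    fun i _ => ⟨y i, by rw [Finset.sum_singleton]⟩, rfl⟩

theorem coadjointOrbit_subset_basicSubvariety :
    coadjointOrbit e D ξ ⊆ basicSubvariety e D ξ := by
  rintro _ ⟨x, rfl⟩
  convert sum_comp_expNil_mem_basicSubvariety e D ξ (fun _ => x) using 1
  ext
  simp [LinearMap.sum_apply]

end BasicSubvariety

theorem stmt12_general {n : Type*} [LieRing n] [LieAlgebra ℂ n]
    (α β : EuclideanSpace ℝ (Fin 2))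
    (hαα : ⟪α, α⟫ = 1) (hββ : ⟪β, β⟫ = 3) (hαβ : ⟪α, β⟫ = -(3/2))
    -- the six positive roots of `G₂`: `α, β, α+β, 2α+β, 3α+β, 3α+2β`, indexed by `Fin 6`
    (root : Fin 6 → EuclideanSpace ℝ (Fin 2))
    (hroot : root = ![α, β, α + β, (2:ℝ) • α + β, (3:ℝ) • α + β, (3:ℝ) • α + (2:ℝ) • β])
    (c₁ c₂ c₃ c₄ c₅ : ℂ)
    (hc₁ : c₁ ≠ 0) (hc₃ : c₃ ≠ 0)
    (e : Module.Basis (Fin 6) ℂ n)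
    (h01 : ⁅e 0, e 1⁆ = c₁ • e 2)
    (h02 : ⁅e 0, e 2⁆ = c₂ • e 3)
    (h03 : ⁅e 0, e 3⁆ = c₃ • e 4)
    (h41 : ⁅e 4, e 1⁆ = c₄ • e 5)
    (h23 : ⁅e 2, e 3⁆ = c₅ • e 5)
    (h0 : ∀ i j : Fin 6, root i + root j ∉ Set.range root → ⁅e i, e j⁆ = 0)
    (hnil : ∀ x : n, IsNilpotent (LieAlgebra.ad ℂ n x))
    (ξ : Fin 6 → ℂ) (hξ₂ : ξ 2 ≠ 0) (hξ₄ : ξ 4 ≠ 0) :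
    coadjointOrbit e {2, 4} ξ ⊂ basicSubvariety e {2, 4} ξ := by
  subst hroot
  have hαβ_indep : LinearIndependent ℝ ![α, β] :=
    linearIndependent_pair_of_gram_ne_zero (by rw [hαα, hββ, hαβ]; norm_num)
  have hG : IsG2NilradicalBasis e c₁ c₂ c₃ c₄ c₅ := ⟨h01, h02, h03, h41, h23, fun i j hij =>
    h0 i j fun hmem => by
      rw [← g2PosRoot_eq_vec] at hmem
      obtain ⟨k, hk⟩ := exists_g2PosRootCoeff_eq_add hαβ_indep hmem
      exact hij k hk⟩
  refine (Set.ssubset_iff_of_subset (coadjointOrbit_subset_basicSubvariety e _ ξ)).2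
    ⟨_, sum_comp_expNil_mem_basicSubvariety e {2, 4} ξ (Pi.single 2 (e 0)), ?_⟩
  rintro ⟨x, hx⟩
  have hx0 : e.repr x 0 = 0 := by
    simpa [hG.expNil_neg_ad_apply_three, hnil, expNil_zero, hξ₄, hc₃]
      using LinearMap.congr_fun hx (e 3)
  simpa [hG.expNil_neg_ad_apply_one, hnil, expNil_zero, hx0, hξ₂, hc₁]
    using LinearMap.congr_fun hx (e 1)

theorem stmt12 {n : Type*} [LieRing n] [LieAlgebra ℂ n]
    (α β : EuclideanSpace ℝ (Fin 2))
    (hαα : ⟪α, α⟫ = 1) (hββ : ⟪β, β⟫ = 3) (hαβ : ⟪α, β⟫ = -(3/2))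
    -- the six positive roots of `G₂`: `α, β, α+β, 2α+β, 3α+β, 3α+2β`, indexed by `Fin 6`
    (root : Fin 6 → EuclideanSpace ℝ (Fin 2))
    (hroot : root = ![α, β, α + β, (2:ℝ) • α + β, (3:ℝ) • α + β, (3:ℝ) • α + (2:ℝ) • β])
    (c₁ c₂ c₃ c₄ c₅ : ℂ)
    (hc₁ : c₁ ≠ 0) (hc₂ : c₂ ≠ 0) (hc₃ : c₃ ≠ 0) (hc₄ : c₄ ≠ 0) (hc₅ : c₅ ≠ 0)
    (e : Module.Basis (Fin 6) ℂ n)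
    (h01 : ⁅e 0, e 1⁆ = c₁ • e 2)
    (h02 : ⁅e 0, e 2⁆ = c₂ • e 3)
    (h03 : ⁅e 0, e 3⁆ = c₃ • e 4)
    (h41 : ⁅e 4, e 1⁆ = c₄ • e 5)
    (h23 : ⁅e 2, e 3⁆ = c₅ • e 5)
    (h0 : ∀ i j : Fin 6, root i + root j ∉ Set.range root → ⁅e i, e j⁆ = 0)
    (hnil : ∀ x : n, IsNilpotent (LieAlgebra.ad ℂ n x))
    (ξ : Fin 6 → ℂ) (hξ₂ : ξ 2 ≠ 0) (hξ₄ : ξ 4 ≠ 0) :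
    coadjointOrbit e {2, 4} ξ ⊂ basicSubvariety e {2, 4} ξ :=
  stmt12_general α β hαα hββ hαβ root hroot c₁ c₂ c₃ c₄ c₅ hc₁ hc₃ e h01 h02 h03 h41 h23 h0 hnil ξ
    hξ₂ hξ₄
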